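/- arXiv:1501.04001 — 3 statements merged into one kernel-verified Lean document; each statement's English description precedes it below -/
import Mathlib

section
/- Let x and y be sequences of length m over a linearly ordered alphabet Σ, let ρ_x be the rank function of x and r = ρ_x⁻¹. Then x ≈ y if and only if both of the following hold: (1) y[r(i)] ≤ y[r(i+1)] for all 0 ≤ i < m−1, and (2) for all 0 ≤ i < m−1, x[r(i)] = x[r(i+1)] if and only if y[r(i)] = y[r(i+1)]. -/
variable {α : Type*} [LinearOrder α]

/-- β_x(i,j) = 1 if x[i] ≥ x[j], 0 otherwise. -/
def beta {m : ℕ} (x : Fin m → α) (i j : Fin m) : ℕ :=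
  if x j ≤ x i then 1 else 0

/-- The rank function ρ_x. -/
def rankFn {m : ℕ} (x : Fin m → α) (i : Fin m) : ℕ :=
  (Finset.univ.filter fun j => x j < x i ∨ (x j = x i ∧ j < i)).card

/-- Order isomorphism of two sequences of the same length. -/
def OrderIsom {m : ℕ} (x y : Fin m → α) : Prop :=
  ∀ i j : Fin m, x i ≤ x j ↔ y i ≤ y j

/-- The q-neighborhood-ranking value χ^q_x[i]. -/
def chi {m : ℕ} (x : Fin m → α) (q i : ℕ) (h : i + q < m) : ℕ :=
  ∑ j : Fin q, beta x ⟨i, by omega⟩ ⟨i + (j.val + 1), by have := j.isLt; omega⟩ *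
    2 ^ (q - (j.val + 1))

/-- The q-neighborhood-ordering value φ^q_x[i]. -/
def phi {m : ℕ} (x : Fin m → α) (q i : ℕ) (h : i + q < m) : ℕ :=
  ∑ k : Fin q, chi x (k.val + 1) (i + q - (k.val + 1)) (by have := k.isLt; omega) *
    2 ^ ((k.val + 1) * k.val / 2)

open Finset

/-!
Listing `x` along `r` lists its entries in the lexicographic order of the pairs `(x i, i)`, so
`x ∘ r` is monotone and `r` is a permutation. Comparisons between entries of a monotone sequence
are determined by its consecutive steps: for `a ≤ b`, `f b ≤ f a` means `f a = f b`, which means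
that every step between `a` and `b` is an equality. Hence `x ∘ r` and `y ∘ r` make the same
comparisons as soon as `y ∘ r` is monotone and has its equality steps where `x ∘ r` has them.
-/

theorem Finset.card_filter_lt_lt_card_filter_lt_iff {ι β : Type*} [Fintype ι] [LinearOrder β]
    (f : ι → β) {i k : ι} :
    #{j | f j < f i} < #{j | f j < f k} ↔ f i < f k := by
  constructor
  · intro hcard
    by_contra! hki
    refine hcard.not_ge (card_le_card fun j hj => ?_)
    simp only [mem_filter, mem_univ, true_and] at hj ⊢
    exact hj.trans_le hki
  · intro hik
    refine card_lt_card ((ssubset_iff_of_subset fun j hj => ?_).2 ⟨i, ?_⟩)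
    · simp only [mem_filter, mem_univ, true_and] at hj ⊢
      exact hj.trans hik
    · simp [hik]

theorem rankFn_eq_card_lex_lt {m : ℕ} (x : Fin m → α) (i : Fin m) :
    rankFn x i = #{j | toLex (x j, j) < toLex (x i, i)} := by
  simp only [rankFn, Prod.Lex.toLex_lt_toLex]

theorem rankFn_lt_rankFn_iff {m : ℕ} (x : Fin m → α) {i j : Fin m} :
    rankFn x i < rankFn x j ↔ toLex (x i, i) < toLex (x j, j) := by
  simp only [rankFn_eq_card_lex_lt]
  exact Finset.card_filter_lt_lt_card_filter_lt_iff fun k => toLex (x k, k)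

theorem OrderIsom.eq_iff {m : ℕ} {x y : Fin m → α} (h : OrderIsom x y) (i j : Fin m) :
    x i = x j ↔ y i = y j := by
  simp only [le_antisymm_iff, h i j, h j i]

section RankInverse

variable {m : ℕ} {x : Fin m → α} {r : Fin m → Fin m}

theorem bijective_of_rankFn_eq (hr : ∀ i, rankFn x (r i) = i.val) : Function.Bijective r :=
  Finite.injective_iff_bijective.1 fun a b hab => Fin.ext (by rw [← hr a, ← hr b, hab])

theorem monotone_comp_of_rankFn_eq (hr : ∀ i, rankFn x (r i) = i.val) : Monotone (x ∘ r) := by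
  intro a b hab
  rcases hab.eq_or_lt with rfl | hlt
  · exact le_rfl
  · have hlex : toLex (x (r a), r a) < toLex (x (r b), r b) := by
      rwa [← rankFn_lt_rankFn_iff, hr, hr]
    exact Prod.Lex.monotone_fst _ _ hlex.le

end RankInverse

theorem Fin.rel_of_forall_rel_succ_of_le {β : Type*} {m : ℕ} (R : β → β → Prop) [Std.Refl R]
    [IsTrans β R] {f : Fin m → β} {a b : Fin m}
    (h : ∀ i (hi : i + 1 < m), a ≤ i → i < b → R (f ⟨i, Nat.lt_of_succ_lt hi⟩) (f ⟨i + 1, hi⟩))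
    (hab : a ≤ b) : R (f a) (f b) := by
  obtain ⟨b, hb⟩ := b
  induction b, (show a.val ≤ b from hab) using Nat.le_induction with
  | base => exact refl _
  | succ n han ih =>
    have hprefix : R (f a) (f ⟨n, by omega⟩) :=
      ih (by omega) (fun i hi hai hin => h i hi hai (by simp at hin ⊢; omega)) han
    exact _root_.trans hprefix (h n hb han (by simp))

theorem Fin.monotone_of_le_succ {β : Type*} [Preorder β] {m : ℕ} {f : Fin m → β}
    (h : ∀ i (hi : i + 1 < m), f ⟨i, Nat.lt_of_succ_lt hi⟩ ≤ f ⟨i + 1, hi⟩) : Monotone f :=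
  fun _ _ => Fin.rel_of_forall_rel_succ_of_le (· ≤ ·) fun i hi _ _ => h i hi

theorem Monotone.fin_eq_iff_forall_eq_succ {β : Type*} [PartialOrder β] {m : ℕ} {f : Fin m → β}
    (hf : Monotone f) {a b : Fin m} (hab : a ≤ b) :
    f a = f b ↔
      ∀ i (hi : i + 1 < m), a ≤ i → i < b → f ⟨i, Nat.lt_of_succ_lt hi⟩ = f ⟨i + 1, hi⟩ := by
  refine ⟨fun heq i hi hai hib => le_antisymm (hf (by simp)) ?_,
    fun h => Fin.rel_of_forall_rel_succ_of_le (· = ·) h hab⟩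
  calc f ⟨i + 1, hi⟩ ≤ f b := hf (Fin.mk_le_of_le_val hib)
    _ = f a := heq.symm
    _ ≤ f ⟨i, by omega⟩ := hf (Fin.le_def.2 hai)

theorem le_iff_le_of_monotone_of_eq_iff_eq {ι β γ : Type*} [LinearOrder ι] [PartialOrder β]
    [PartialOrder γ] {f : ι → β} {g : ι → γ} (hf : Monotone f) (hg : Monotone g)
    (heq : ∀ a b, a ≤ b → (f a = f b ↔ g a = g b)) (a b : ι) : f a ≤ f b ↔ g a ≤ g b := by
  rcases le_or_gt a b with hab | hba
  · exact iff_of_true (hf hab) (hg hab)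
  · rw [(hf hba.le).ge_iff_eq, (hg hba.le).ge_iff_eq]
    exact heq b a hba.le

/-- `x ≈ y` iff `y` is nondecreasing along the inverse rank permutation `r` of `x`,
and consecutive equalities along `r` agree between `x` and `y`. -/
theorem orderIsom_iff_rank_and_eq_conditions {m : ℕ} (x y : Fin m → α)
    (r : Fin m → Fin m) (hr : ∀ i : Fin m, rankFn x (r i) = i.val) :
    OrderIsom x y ↔
      ((∀ i : ℕ, ∀ h : i + 1 < m, y (r ⟨i, by omega⟩) ≤ y (r ⟨i + 1, h⟩)) ∧
       (∀ i : ℕ, ∀ h : i + 1 < m,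
          (x (r ⟨i, by omega⟩) = x (r ⟨i + 1, h⟩) ↔
           y (r ⟨i, by omega⟩) = y (r ⟨i + 1, h⟩)))) := by
  have hx : Monotone (x ∘ r) := monotone_comp_of_rankFn_eq hr
  constructor
  · intro hiso
    exact ⟨fun i hi => (hiso _ _).1 (hx (Fin.mk_le_mk.2 i.le_succ)), fun i hi => hiso.eq_iff _ _⟩
  · rintro ⟨hstep, hstep_eq⟩
    have hy : Monotone (y ∘ r) := Fin.monotone_of_le_succ hstep
    rw [OrderIsom, (bijective_of_rankFn_eq hr).surjective.forall₂]
    refine le_iff_le_of_monotone_of_eq_iff_eq hx hy fun a b hab => ?_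
    calc x (r a) = x (r b)
        ↔ ∀ i (hi : i + 1 < m), a ≤ i → i < b → x (r ⟨i, _⟩) = x (r ⟨i + 1, hi⟩) :=
          hx.fin_eq_iff_forall_eq_succ hab
      _ ↔ ∀ i (hi : i + 1 < m), a ≤ i → i < b → y (r ⟨i, _⟩) = y (r ⟨i + 1, hi⟩) :=
          forall₄_congr fun i hi _ _ => hstep_eq i hi
      _ ↔ y (r a) = y (r b) := (hy.fin_eq_iff_forall_eq_succ hab).symm
end

section
/- (Corollary 1, NR filtering) Let x be a sequence of length m and y a sequence of length n over a linearly ordered alphabet Σ, let q be an integer with 0 < q < m, and let j be an index with j + m ≤ n. If x ≈ y[j…j+m−1], then χ^q_x[i] = χ^q_y[j+i] for all 0 ≤ i < m − q. -/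
variable {α : Type*} [LinearOrder α]

theorem OrderIsom.beta_eq {m : ℕ} {x y : Fin m → α} (h : OrderIsom x y) (i k : Fin m) :
    beta x i k = beta y i k := by
  simp only [beta, h k i]

theorem OrderIsom.chi_eq {m : ℕ} {x y : Fin m → α} (h : OrderIsom x y) (q i : ℕ)
    (hi : i + q < m) : chi x q i hi = chi y q i hi := by
  simp only [chi, h.beta_eq]

theorem chi_window {m n : ℕ} (y : Fin n → α) (j : ℕ) (hj : j + m ≤ n) (q i : ℕ)
    (hi : i + q < m) :
    chi (fun l : Fin m => y ⟨j + l.val, by have := l.isLt; omega⟩) q i hi =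
      chi y q (j + i) (by omega) := by
  simp only [chi, beta, Nat.add_assoc]

/-- Corollary 1 (NR filtering): if `x ≈ y[j…j+m−1]` then `χ^q_x[i] = χ^q_y[j+i]`
for all `0 ≤ i < m − q`. -/
theorem chi_filter {m n : ℕ} (x : Fin m → α) (y : Fin n → α) (q : ℕ)
    (j : ℕ) (hj : j + m ≤ n)
    (h : OrderIsom x (fun l : Fin m => y ⟨j + l.val, by have := l.isLt; omega⟩)) :
    ∀ i : ℕ, ∀ hi : i + q < m, chi x q i hi = chi y q (j + i) (by omega) := by
  intro i hi
  rw [h.chi_eq, chi_window y j hj]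
end

section
/- Let x and y be sequences over a linearly ordered alphabet Σ, let q ≥ 1, and let i, i' be indices such that the q-NO values φ^q_x[i] and φ^q_y[i'] are defined (i.e. i + q < |x| and i' + q < |y|). Then φ^q_x[i] = φ^q_y[i'] if and only if β_x(i+a, i+b) = β_y(i'+a, i'+b) for all 0 ≤ a < b ≤ q; that is, the q-NO value uniquely encodes all pairwise comparisons within the q-neighborhood ⟨x[i], x[i+1], …, x[i+q]⟩. -/
variable {α : Type*} [LinearOrder α]

/-!
`φ^q_x[i]` is a mixed-radix numeral: its `k`-th digit is `χ^{k+1}_x[i+q-k-1] < 2^{k+1}`, and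
its place value `2^{k(k+1)/2}` is the product of the bounds `2^1, …, 2^k` of the earlier
digits. Each `χ^{k+1}_x[j]` is in turn a binary numeral whose bits are the comparisons
`β_x(j, j+l)`, `1 ≤ l ≤ k+1`. By uniqueness of digits, `φ^q_x[i]` determines, and is determined
by, these bits, which are exactly the `β_x(i+a, i+b)` with `a < b ≤ q`.
-/

open Finset

theorem Nat.add_mul_eq_add_mul_iff_of_lt {P a b c d : ℕ} (ha : a < P) (hc : c < P) :
    a + b * P = c + d * P ↔ a = c ∧ b = d := by
  have hP : 0 < P := by omega
  have divMod : ∀ r s, r < P → (r + s * P) / P = s ∧ (r + s * P) % P = r := fun r s hr =>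
    (Nat.div_mod_unique hP).2 ⟨by ring, hr⟩
  refine ⟨fun h => ?_, fun ⟨rfl, rfl⟩ => rfl⟩
  obtain ⟨hb, ha'⟩ := divMod a b ha
  obtain ⟨hd, hc'⟩ := divMod c d hc
  rw [h] at hb ha'
  exact ⟨ha'.symm.trans hc', hb.symm.trans hd⟩

section MixedRadix

variable {n : ℕ} {B : ℕ → ℕ}

theorem Fin.sum_mul_prod_range_lt {f : Fin n → ℕ} (hf : ∀ k, f k < B k) :
    ∑ k, f k * ∏ j ∈ range k, B j < ∏ j ∈ range n, B j := by
  induction n with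
  | zero => simp
  | succ n ih =>
    rw [Fin.sum_univ_castSucc, prod_range_succ]
    have hlow := ih fun k => hf k.castSucc
    have htop : f (Fin.last n) + 1 ≤ B n := hf (Fin.last n)
    simp only [Fin.val_castSucc, Fin.val_last] at hlow ⊢
    nlinarith [Nat.mul_le_mul_left (∏ j ∈ range n, B j) htop]

theorem Fin.sum_mul_prod_range_eq_iff {f g : Fin n → ℕ} (hf : ∀ k, f k < B k)
    (hg : ∀ k, g k < B k) :
    ∑ k, f k * ∏ j ∈ range k, B j = ∑ k, g k * ∏ j ∈ range k, B j ↔ ∀ k, f k = g k := by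
  induction n with
  | zero => simp
  | succ n ih =>
    rw [Fin.sum_univ_castSucc, Fin.sum_univ_castSucc, Fin.forall_fin_succ',
      ← ih (fun k => hf k.castSucc) (fun k => hg k.castSucc)]
    simp only [Fin.val_castSucc, Fin.val_last]
    exact Nat.add_mul_eq_add_mul_iff_of_lt (Fin.sum_mul_prod_range_lt fun k => hf k.castSucc)
      (Fin.sum_mul_prod_range_lt fun k => hg k.castSucc)

end MixedRadix

theorem prod_range_pow_succ (b k : ℕ) :
    ∏ j ∈ range k, b ^ (j + 1) = b ^ ((k + 1) * k / 2) := by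
  have triangle := sum_range_id (k + 1)
  rw [sum_range_succ'] at triangle
  simp_all [prod_pow_eq_pow_sum]

theorem beta_lt_two {m : ℕ} (x : Fin m → α) (i j : Fin m) : beta x i j < 2 := by
  unfold beta; split <;> omega

theorem chi_eq_sum_rev {m : ℕ} (x : Fin m → α) (q i : ℕ) (hi : i + q < m) :
    chi x q i hi = ∑ t : Fin q,
      beta x ⟨i, by omega⟩ ⟨i + (t.rev + 1), by omega⟩ * ∏ _j ∈ range t, 2 := by
  refine Fintype.sum_equiv Fin.revPerm _ _ fun j => ?_
  simp only [Fin.revPerm_apply, Fin.rev_rev, Fin.val_rev, prod_const, card_range]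

theorem chi_lt {m : ℕ} (x : Fin m → α) (q i : ℕ) (hi : i + q < m) : chi x q i hi < 2 ^ q := by
  simpa [chi_eq_sum_rev] using Fin.sum_mul_prod_range_lt (B := fun _ => 2) fun _ => beta_lt_two ..

theorem chi_eq_iff_beta_eq {m n : ℕ} (x : Fin m → α) (y : Fin n → α) (q i i' : ℕ)
    (hi : i + q < m) (hi' : i' + q < n) :
    chi x q i hi = chi y q i' hi' ↔ ∀ j : Fin q,
      beta x ⟨i, by omega⟩ ⟨i + (j + 1), by omega⟩ =
      beta y ⟨i', by omega⟩ ⟨i' + (j + 1), by omega⟩ := by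
  rw [chi_eq_sum_rev, chi_eq_sum_rev,
    Fin.sum_mul_prod_range_eq_iff (fun _ => beta_lt_two ..) fun _ => beta_lt_two ..]
  exact ⟨fun h j => by simpa using h j.rev, fun h j => h j.rev⟩

theorem phi_eq_iff_chi_eq {m n : ℕ} (x : Fin m → α) (y : Fin n → α) (q i i' : ℕ)
    (hi : i + q < m) (hi' : i' + q < n) :
    phi x q i hi = phi y q i' hi' ↔ ∀ k : Fin q,
      chi x (k + 1) (i + q - (k + 1)) (by omega) =
      chi y (k + 1) (i' + q - (k + 1)) (by omega) := by
  unfold phi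
  simp only [← prod_range_pow_succ]
  exact Fin.sum_mul_prod_range_eq_iff (fun _ => chi_lt ..) fun _ => chi_lt ..

/-- The q-NO value uniquely encodes all pairwise comparisons within the
q-neighborhood: two NO values agree iff all corresponding `β` comparisons
within the neighborhoods agree. -/
theorem phi_eq_iff_beta_eq {m n : ℕ} (x : Fin m → α) (y : Fin n → α) (q : ℕ)
    (i i' : ℕ) (hi : i + q < m) (hi' : i' + q < n) :
    phi x q i hi = phi y q i' hi' ↔
      ∀ a b : ℕ, ∀ hab : a < b, ∀ hb : b ≤ q,
        beta x ⟨i + a, by omega⟩ ⟨i + b, by omega⟩ =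
        beta y ⟨i' + a, by omega⟩ ⟨i' + b, by omega⟩ := by
  rw [phi_eq_iff_chi_eq]
  simp only [chi_eq_iff_beta_eq]
  constructor
  · intro h a b hab hb
    convert h ⟨q - (a + 1), by omega⟩ ⟨b - (a + 1), by dsimp only; omega⟩ using 3 <;>
      dsimp only <;> omega
  · intro h k j
    have := k.isLt
    have := j.isLt
    convert h (q - (k + 1)) (q - (k + 1) + (j + 1)) (by omega) (by omega) using 3 <;> omega
end
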